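/- Let R be the free noncommutative F-algebra on two generators X₁, X₂ over F = ℚ(A), with the endomorphisms T₁, T₁⁻, T₂, T₂⁻ and the two-sided ideal J as above. Then for k ∈ {1,2}, the elements T₁(T₁⁻(X_k)) − X_k, T₁⁻(T₁(X_k)) − X_k, T₂(T₂⁻(X_k)) − X_k and T₂⁻(T₂(X_k)) − X_k all belong to J; that is, on generators, T₁ and T₁⁻ (respectively T₂ and T₂⁻) are mutually inverse modulo J. -/

import Mathlib

/-- `F = ℚ(A)`, the field of rational functions in one variable over `ℚ`. -/
noncomputable abbrev F : Type := RatFunc ℚ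

/-- The variable `A ∈ ℚ(A)`. -/
noncomputable def A : F := RatFunc.X

/-- The deformed bracket `[x,y]_A = A·(x*y) − A⁻¹·(y*x)` in an `F`-algebra. -/
noncomputable def brA {S : Type*} [Ring S] [Algebra F S] (x y : S) : S :=
  A • (x * y) - A⁻¹ • (y * x)

/-- `R`, the free noncommutative `F`-algebra on two generators. -/
noncomputable abbrev R : Type := FreeAlgebra F (Fin 2)

/-- The first generator `X₁`. -/
noncomputable def X1 : R := FreeAlgebra.ι F 0

/-- The second generator `X₂`. -/
noncomputable def X2 : R := FreeAlgebra.ι F 1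

/-- The generators as a function on `Fin 2`. -/
noncomputable def X : Fin 2 → R := ![X1, X2]

/-- `T₁ : X₁ ↦ X₁, X₂ ↦ [X₁,X₂]_A`. -/
noncomputable def T1 : R →ₐ[F] R := FreeAlgebra.lift F ![X1, brA X1 X2]

/-- `T₁⁻ : X₁ ↦ X₁, X₂ ↦ [X₂,X₁]_A`. -/
noncomputable def T1inv : R →ₐ[F] R := FreeAlgebra.lift F ![X1, brA X2 X1]

/-- `T₂ : X₁ ↦ [X₂,X₁]_A, X₂ ↦ X₂`. -/
noncomputable def T2 : R →ₐ[F] R := FreeAlgebra.lift F ![brA X2 X1, X2]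

/-- `T₂⁻ : X₁ ↦ [X₁,X₂]_A, X₂ ↦ X₂`. -/
noncomputable def T2inv : R →ₐ[F] R := FreeAlgebra.lift F ![brA X1 X2, X2]

/-- The two-sided ideal `J` generated by `[[X₁,X₂]_A, X₁]_A − X₂` and
`[[X₂,X₁]_A, X₂]_A − X₁`. -/
noncomputable def J : TwoSidedIdeal R :=
  TwoSidedIdeal.span {brA (brA X1 X2) X1 - X2, brA (brA X2 X1) X2 - X1}

/-! On `X₁` the maps `T₁, T₁⁻` (and on `X₂` the maps `T₂, T₂⁻`) are the identity. On the other
generator both composites give the same element, `[[X₁,X₂]_A,X₁]_A` (resp. `[[X₂,X₁]_A,X₂]_A`),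
because the bracket satisfies `[x,[y,x]_A]_A = [[x,y]_A,x]_A`; modulo `J` this element is the
generator itself. -/

lemma brA_assoc {S : Type*} [Ring S] [Algebra F S] (x y : S) :
    brA x (brA y x) = brA (brA x y) x := by
  simp only [brA, mul_sub, sub_mul, smul_sub, smul_smul, mul_smul_comm, smul_mul_assoc, mul_assoc,
    mul_comm A⁻¹ A]
  abel

lemma AlgHom.map_brA {S T : Type*} [Ring S] [Algebra F S] [Ring T] [Algebra F T]
    (f : S →ₐ[F] T) (x y : S) : f (brA x y) = brA (f x) (f y) := by
  simp [brA]

@[simp] lemma T1_X1 : T1 X1 = X1 := FreeAlgebra.lift_ι_apply _ _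
@[simp] lemma T1_X2 : T1 X2 = brA X1 X2 := FreeAlgebra.lift_ι_apply _ _
@[simp] lemma T1inv_X1 : T1inv X1 = X1 := FreeAlgebra.lift_ι_apply _ _
@[simp] lemma T1inv_X2 : T1inv X2 = brA X2 X1 := FreeAlgebra.lift_ι_apply _ _
@[simp] lemma T2_X1 : T2 X1 = brA X2 X1 := FreeAlgebra.lift_ι_apply _ _
@[simp] lemma T2_X2 : T2 X2 = X2 := FreeAlgebra.lift_ι_apply _ _
@[simp] lemma T2inv_X1 : T2inv X1 = brA X1 X2 := FreeAlgebra.lift_ι_apply _ _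
@[simp] lemma T2inv_X2 : T2inv X2 = X2 := FreeAlgebra.lift_ι_apply _ _

lemma brA_brA_X1_X2_X1_sub_X2_mem_J : brA (brA X1 X2) X1 - X2 ∈ J :=
  TwoSidedIdeal.subset_span (Set.mem_insert _ _)

lemma brA_brA_X2_X1_X2_sub_X1_mem_J : brA (brA X2 X1) X2 - X1 ∈ J :=
  TwoSidedIdeal.subset_span (Set.mem_insert_of_mem _ rfl)

/-- On generators, `T₁` and `T₁⁻` (respectively `T₂` and `T₂⁻`) are mutually inverse
modulo `J`. -/
theorem T_mutually_inverse_on_generators_mem (k : Fin 2) :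
    T1 (T1inv (X k)) - X k ∈ J ∧ T1inv (T1 (X k)) - X k ∈ J ∧
    T2 (T2inv (X k)) - X k ∈ J ∧ T2inv (T2 (X k)) - X k ∈ J := by
  fin_cases k <;>
    simp only [X, Fin.zero_eta, Fin.mk_one, Matrix.cons_val_zero, Matrix.cons_val_one,
      T1_X1, T1_X2, T1inv_X1, T1inv_X2, T2_X1, T2_X2, T2inv_X1, T2inv_X2, AlgHom.map_brA,
      brA_assoc, sub_self]
  · exact ⟨J.zero_mem, J.zero_mem, brA_brA_X2_X1_X2_sub_X1_mem_J, brA_brA_X2_X1_X2_sub_X1_mem_J⟩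
  · exact ⟨brA_brA_X1_X2_X1_sub_X2_mem_J, brA_brA_X1_X2_X1_sub_X2_mem_J, J.zero_mem, J.zero_mem⟩
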